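/- For every even integer k ≥ 2 and every pair (t_b, t_d) with kπ/(k+1) ≤ t_b < t_d ≤ π, there exists a subset X ⊆ S¹ with 2k+2 points such that t_b(X) = t_b and t_d(X) = t_d. Conversely, every X ⊆ S¹ with 2k+2 points and t_b(X) < t_d(X) satisfies kπ/(k+1) ≤ t_b(X) and t_d(X) ≤ π. -/

import Mathlib

/-!
If `t_b(X) < t_d(X)`, every point `x` has exactly one point at distance `≥ t_d(X)`, its partner,
all others lying within `t_b(X)` of `x`. Enumerate the lifts of `X ⊆ ℝ / 2πℤ` as an increasing
sequence `Θ : ℤ → ℝ` with `Θ (i + 2k + 2) = Θ i + 2π`. Two partner chords cannot nest, so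
partnering becomes a strictly monotone `f` with `f (f i) = i + 2k + 2`, which forces
`f i = i + k + 1`. Hence every arc `Θ (i + k) - Θ i` is at most `t_b(X)`, and the `2k + 2` arcs
`Θ ((j + 1) k) - Θ (j k)` wind `k` times around the circle: `2πk ≤ (2k + 2) t_b(X)`.

Conversely, write `t_b = kπ / (k + 1) + ε`, `t_d = π - δ` and move the vertices of the regular
`(2k + 2)`-gon: all but the antipodal pair `0, k + 1` forward by `ε`, and the odd ones back by `δ`.
Antipodal vertices end up at distance `t_d`. As `k` is even, vertices `k` or `k + 2` apart have the
same parity, so every other pair is within `t_b`, with equality for the vertices `0` and `k`.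
-/

/-- The largest distance from `x` to any point of `X`. -/
noncomputable def ptTd (X : Type*) [MetricSpace X] (x : X) : ℝ :=
  sSup (Set.range fun y => dist x y)

/-- The second largest distance (counted with multiplicity over points) from `x`
to points of `X`. -/
noncomputable def ptTb (X : Type*) [MetricSpace X] (x : X) : ℝ :=
  sSup {r : ℝ | ∃ y z : X, y ≠ z ∧ r = min (dist x y) (dist x z)}

/-- `t_b(X) = max_{x ∈ X} t_b(x)`. -/
noncomputable def tbX (X : Type*) [MetricSpace X] : ℝ :=
  sSup (Set.range (ptTb X))

/-- `t_d(X) = min_{x ∈ X} t_d(x)`. -/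
noncomputable def tdX (X : Type*) [MetricSpace X] : ℝ :=
  sInf (Set.range (ptTd X))


open Finset Real

section FiniteMetric

open Set

variable {X : Type*} [MetricSpace X] [Finite X]

theorem dist_le_ptTd (x y : X) : dist x y ≤ ptTd X x :=
  le_csSup (finite_range _).bddAbove ⟨y, rfl⟩

theorem exists_dist_eq_ptTd (x : X) : ∃ y, dist x y = ptTd X x :=
  have : Nonempty X := ⟨x⟩
  (range_nonempty _).csSup_mem (finite_range _)

theorem min_dist_le_ptTb (x : X) {y z : X} (hyz : y ≠ z) :
    min (dist x y) (dist x z) ≤ ptTb X x :=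
  le_csSup ((finite_range fun p : X × X => min (dist x p.1) (dist x p.2)).subset
    (by rintro _ ⟨y, z, -, rfl⟩; exact ⟨(y, z), rfl⟩)).bddAbove ⟨y, z, hyz, rfl⟩

theorem ptTb_le_tbX (x : X) : ptTb X x ≤ tbX X :=
  le_csSup (finite_range _).bddAbove ⟨x, rfl⟩

theorem tdX_le_ptTd (x : X) : tdX X ≤ ptTd X x :=
  csInf_le (finite_range _).bddBelow ⟨x, rfl⟩

theorem tdX_le_of_forall_dist_le (x : X) {r : ℝ} (h : ∀ y, dist x y ≤ r) : tdX X ≤ r :=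
  have : Nonempty X := ⟨x⟩
  (tdX_le_ptTd x).trans (csSup_le (range_nonempty _) (by rintro _ ⟨y, rfl⟩; exact h y))

theorem min_dist_le_tbX (x : X) {y z : X} (hyz : y ≠ z) :
    min (dist x y) (dist x z) ≤ tbX X :=
  (min_dist_le_ptTb x hyz).trans (ptTb_le_tbX x)

theorem tbX_nonneg [Nontrivial X] : 0 ≤ tbX X := by
  obtain ⟨y, z, hyz⟩ := exists_pair_ne X
  exact (le_min dist_nonneg dist_nonneg).trans (min_dist_le_tbX y hyz)

theorem exists_partner_of_tbX_lt_tdX (h : tbX X < tdX X) (x : X) :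
    ∃ y, tdX X ≤ dist x y ∧ ∀ z, z ≠ y → dist x z ≤ tbX X := by
  obtain ⟨y, hy⟩ := exists_dist_eq_ptTd x
  have hdy : tdX X ≤ dist x y := hy ▸ tdX_le_ptTd x
  refine ⟨y, hdy, fun z hzy => ?_⟩
  by_contra! hz
  have := min_dist_le_tbX x hzy
  exact (lt_min hz (h.trans_le hdy)).not_ge this

theorem tbX_eq_and_tdX_eq_of_partner {b d : ℝ} (hbd : b < d)
    (hpartner : ∀ x : X, ∃ y, dist x y = d ∧ ∀ z, z ≠ y → dist x z ≤ b)
    (hb : ∃ x y z : X, y ≠ z ∧ b ≤ dist x y ∧ b ≤ dist x z) :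
    tbX X = b ∧ tdX X = d := by
  obtain ⟨x₀, y₀, z₀, hyz₀, hby₀, hbz₀⟩ := hb
  have : Nonempty X := ⟨x₀⟩
  have hptTd : ptTd X = fun _ => d := by
    funext x
    obtain ⟨y, hy, hz⟩ := hpartner x
    refine le_antisymm (csSup_le (range_nonempty _) ?_) (hy ▸ dist_le_ptTd x y)
    rintro _ ⟨z, rfl⟩
    rcases eq_or_ne z y with rfl | hzy
    · exact hy.le
    · exact (hz z hzy).trans hbd.le
  have hptTb (x : X) : ptTb X x ≤ b := by
    refine csSup_le ⟨_, y₀, z₀, hyz₀, rfl⟩ ?_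
    rintro _ ⟨y, z, hyz, rfl⟩
    obtain ⟨w, -, hw⟩ := hpartner x
    rcases eq_or_ne y w with rfl | hyw
    · exact (min_le_right _ _).trans (hw z hyz.symm)
    · exact (min_le_left _ _).trans (hw y hyw)
  refine ⟨le_antisymm (csSup_le (range_nonempty _) ?_) ?_, ?_⟩
  · rintro _ ⟨x, rfl⟩
    exact hptTb x
  · exact (le_min hby₀ hbz₀).trans (min_dist_le_tbX x₀ hyz₀)
  · rw [tdX, hptTd, range_const, csInf_singleton]

end FiniteMetric

theorem apply_add_mul_eq_add_zsmul {G : Type*} [AddCommGroup G] {Θ : ℤ → G} {n : ℤ} {p : G}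
    (hper : ∀ i, Θ (i + n) = Θ i + p) (i m : ℤ) : Θ (i + m * n) = Θ i + m • p := by
  induction m using Int.induction_on with
  | zero => simp
  | succ m ih => rw [add_mul, one_mul, ← add_assoc, hper, ih, add_zsmul, one_zsmul, add_assoc]
  | pred m ih =>
    have h := hper (i + (-m - 1) * n)
    rw [show i + (-m - 1) * n + n = i + -m * n by ring, ih] at h
    rw [sub_zsmul, one_zsmul, ← add_assoc, h, add_neg_cancel_right]

theorem natCast_mul_le_of_forall_sub_le {Θ : ℤ → ℝ} {n k : ℕ} {p b : ℝ}
    (hper : ∀ i, Θ (i + n) = Θ i + p) (hb : ∀ i, Θ (i + k) - Θ i ≤ b) : k * p ≤ n * b :=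
  calc (k : ℝ) * p = Θ (0 + k * n) - Θ 0 := by
        rw [apply_add_mul_eq_add_zsmul hper, zsmul_eq_mul]; push_cast; ring
    _ = ∑ j ∈ range n, (Θ ((j + 1 : ℕ) * k) - Θ (j * k)) := by
        rw [sum_range_sub (fun j : ℕ => Θ (j * k))]; push_cast; ring_nf
    _ ≤ ∑ _j ∈ range n, b :=
        sum_le_sum fun j _ => by push_cast; simpa [add_mul] using hb (j * k)
    _ = n * b := by simp

theorem Int.sub_le_sub_apply_of_strictMono {f : ℤ → ℤ} (hf : StrictMono f) {i j : ℤ}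
    (hij : i ≤ j) : j - i ≤ f j - f i := by
  induction j, hij using Int.leInduction with
  | base => simp
  | succ j _ ih => have := hf (lt_add_one j); omega

theorem two_mul_sub_eq_of_apply_apply {f : ℤ → ℤ} (hf : StrictMono f) {n : ℤ}
    (hff : ∀ i, f (f i) = i + n) {i : ℤ} (hi : i ≤ f i) : 2 * (f i - i) = n := by
  have h₁ := Int.sub_le_sub_apply_of_strictMono hf hi
  have h₂ := Int.sub_le_sub_apply_of_strictMono hf (hf.monotone hi)
  have h₃ : f (i + n) = f i + n := by rw [← hff i, hff]
  rw [hff, h₃] at h₂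
  rw [hff] at h₁
  omega

namespace AddCircle

variable {p : ℝ}

theorem coe_add_zsmul_period (x : ℝ) (m : ℤ) : ((x + m • p : ℝ) : AddCircle p) = x := by
  rw [coe_add, coe_zsmul, coe_period, smul_zero, add_zero]

variable [hp : Fact (0 < p)]

theorem dist_coe_eq_min {a b : ℝ} (hab : a ≤ b) (hba : b ≤ a + p) :
    dist (a : AddCircle p) b = min (b - a) (p - (b - a)) := by
  have hp₀ : 0 < p := hp.out
  rw [dist_comm, dist_eq_norm, ← coe_sub]
  rcases le_total (b - a) (p / 2) with h | h
  · rw [(norm_coe_eq_abs_iff p hp₀.ne').2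
      (by rw [abs_of_nonneg (by linarith), abs_of_pos hp₀]; exact h),
      abs_of_nonneg (by linarith), min_eq_left (by linarith)]
  · rw [← sub_add_cancel (b - a) p, coe_add_period, (norm_coe_eq_abs_iff p hp₀.ne').2
      (by rw [abs_of_nonpos (by linarith), abs_of_pos hp₀]; linarith),
      abs_of_nonpos (by linarith), min_eq_right (by linarith)]
    ring

theorem exists_strictMono_lift (s : Finset (AddCircle p)) (hs : s.Nonempty) :
    ∃ Θ : ℤ → ℝ, StrictMono Θ ∧ (∀ i, Θ (i + #s) = Θ i + p) ∧
      (∀ i, (Θ i : AddCircle p) ∈ s) ∧ ∀ x ∈ s, ∃ i, (Θ i : AddCircle p) = x := by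
  choose rep hrep_mem hrep using eq_coe_Ico (p := p)
  have hn : (0 : ℤ) < #s := by exact_mod_cast hs.card_pos
  have ht : #(s.image rep) = #s :=
    card_image_of_injective _ (Function.LeftInverse.injective hrep)
  set E := (s.image rep).orderEmbOfFin ht
  have hE (m : Fin #s) : 0 ≤ E m ∧ E m < p ∧ (E m : AddCircle p) ∈ s := by
    obtain ⟨z, hz, hzm⟩ := mem_image.1 ((s.image rep).orderEmbOfFin_mem ht m)
    rw [← hzm, hrep]
    exact ⟨(hrep_mem z).1, (hrep_mem z).2, hz⟩
  let idx (i : ℤ) : Fin #s := ⟨(i % #s).toNat, by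
    have := Int.emod_lt_of_pos i hn; have := Int.emod_nonneg i hn.ne'; omega⟩
  refine ⟨fun i => E (idx i) + (i / #s : ℤ) • p, fun i j hij => ?_, fun i => ?_, fun i => ?_,
    fun x hx => ?_⟩
  · simp only [zsmul_eq_mul]
    rcases (Int.ediv_le_ediv hn hij.le).lt_or_eq with hq | hq
    · have h1 : ((i / #s : ℤ) + 1 : ℝ) ≤ (j / #s : ℤ) := by exact_mod_cast hq
      nlinarith [hp.out, (hE (idx i)).2.1, (hE (idx j)).1]
    · have : idx i < idx j := by
        have := Int.mul_ediv_add_emod i #s; have := Int.mul_ediv_add_emod j #s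
        have := Int.emod_nonneg i hn.ne'
        show (i % #s).toNat < (j % #s).toNat
        rw [hq] at *
        omega
      simp only [hq]
      exact add_lt_add_left (E.strictMono this) _
  · simp only [idx, Int.add_emod_right, Int.add_ediv_of_dvd_right (dvd_refl _),
      Int.ediv_self hn.ne', add_zsmul, one_zsmul, add_assoc]
  · exact (coe_add_zsmul_period _ _).symm ▸ (hE _).2.2
  · obtain ⟨m, hm⟩ : rep x ∈ Set.range E := by
      rw [range_orderEmbOfFin]; exact mem_image_of_mem rep hx
    refine ⟨m, ?_⟩
    have hm_lt : ((m : ℕ) : ℤ) < #s := by exact_mod_cast m.2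
    simp only [idx, Int.emod_eq_of_lt (by omega) hm_lt, Int.ediv_eq_zero_of_lt (by omega) hm_lt,
      Int.toNat_natCast, Fin.eta, hm, zero_smul, add_zero, hrep]

end AddCircle

/-- `f i` indexes the partner of `Θ i` in the window `(i, i + n)`. When `Θ (i + n) = Θ i + p`,
`min (Θ j - Θ i) (Θ (i + n) - Θ j)` is the distance in `AddCircle p` of the images of `Θ i` and
`Θ j` for `i ≤ j ≤ i + n`; the partner is the only point at distance `≥ d`, all others are within
`b`. -/
structure IsFarPartner (Θ : ℤ → ℝ) (n : ℤ) (b d : ℝ) (f : ℤ → ℤ) : Prop where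
  lt_apply : ∀ i, i < f i
  apply_lt : ∀ i, f i < i + n
  le_far : ∀ i, d ≤ min (Θ (f i) - Θ i) (Θ (i + n) - Θ (f i))
  near_le : ∀ i j, i < j → j < i + n → j ≠ f i → min (Θ j - Θ i) (Θ (i + n) - Θ j) ≤ b

namespace IsFarPartner

variable {Θ : ℤ → ℝ} {n : ℤ} {b d : ℝ} {f : ℤ → ℤ}

theorem sub_le_of_lt_apply (h : IsFarPartner Θ n b d f) (hΘ : StrictMono Θ) (hbd : b < d)
    {i j : ℤ} (hij : i < j) (hj : j < f i) : Θ j - Θ i ≤ b := by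
  have hfar := (h.le_far i).trans (min_le_right _ _)
  have := hΘ hj
  exact (min_le_iff.1 (h.near_le i j hij (hj.trans (h.apply_lt i)) hj.ne)).resolve_right
    fun h' => by linarith

theorem sub_le_of_apply_lt (h : IsFarPartner Θ n b d f) (hΘ : StrictMono Θ) (hbd : b < d)
    {i j : ℤ} (hj : f i < j) (hji : j < i + n) : Θ (i + n) - Θ j ≤ b := by
  have hfar := (h.le_far i).trans (min_le_left _ _)
  have := hΘ hj
  exact (min_le_iff.1 (h.near_le i j ((h.lt_apply i).trans hj) hji hj.ne')).resolve_left
    fun h' => by linarith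

theorem apply_apply (h : IsFarPartner Θ n b d f) {p : ℝ} (hper : ∀ i, Θ (i + n) = Θ i + p)
    (hbd : b < d) (i : ℤ) : f (f i) = i + n := by
  by_contra hne
  have := h.near_le (f i) (i + n) (h.apply_lt i) (by linarith [h.lt_apply i]) (Ne.symm hne)
  have hfar := h.le_far i
  rw [hper, hper, add_sub_add_right_eq_sub, min_comm] at this
  rw [hper] at hfar
  linarith

theorem strictMono (h : IsFarPartner Θ n b d f) {p : ℝ} (hΘ : StrictMono Θ)
    (hper : ∀ i, Θ (i + n) = Θ i + p) (hbd : b < d) : StrictMono f := by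
  intro i j hij
  rcases lt_trichotomy (f i) (f j) with hlt | heq | hgt
  · exact hlt
  · have := congrArg f heq
    rw [h.apply_apply hper hbd, h.apply_apply hper hbd] at this
    omega
  · have := h.sub_le_of_apply_lt hΘ hbd hgt (by linarith [h.apply_lt i])
    have := hΘ (show i + n < j + n by omega)
    linarith [(h.le_far i).trans (min_le_right _ _)]

theorem two_mul_sub_eq (h : IsFarPartner Θ n b d f) {p : ℝ} (hΘ : StrictMono Θ)
    (hper : ∀ i, Θ (i + n) = Θ i + p) (hbd : b < d) (i : ℤ) : 2 * (f i - i) = n :=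
  two_mul_sub_eq_of_apply_apply (h.strictMono hΘ hper hbd) (h.apply_apply hper hbd)
    (h.lt_apply i).le

end IsFarPartner

namespace AddCircle

variable {p : ℝ} [hp : Fact (0 < p)]

theorem exists_isFarPartner {s : Finset (AddCircle p)} {Θ : ℤ → ℝ} (hΘ : StrictMono Θ)
    (hper : ∀ i, Θ (i + #s) = Θ i + p) (hmem : ∀ i, (Θ i : AddCircle p) ∈ s)
    (hsurj : ∀ x ∈ s, ∃ i, (Θ i : AddCircle p) = x) (hb : 0 ≤ tbX s) (h : tbX s < tdX s) :
    ∃ f, IsFarPartner Θ #s (tbX s) (tdX s) f := by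
  have hdist {i j : ℤ} (hij : i ≤ j) (hji : j ≤ i + #s) :
      dist (Θ i : AddCircle p) (Θ j) = min (Θ j - Θ i) (Θ (i + #s) - Θ j) := by
    rw [dist_coe_eq_min (hΘ.monotone hij) (hper i ▸ hΘ.monotone hji), hper]
    ring_nf
  have hcoe_inj {i j j' : ℤ} (hj : i < j ∧ j < i + #s) (hj' : i < j' ∧ j' < i + #s)
      (heq : (Θ j : AddCircle p) = Θ j') : j = j' := by
    have hmem_Ico {j : ℤ} (hj : i < j ∧ j < i + #s) : Θ j ∈ Set.Ico (Θ i) (Θ i + p) :=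
      ⟨(hΘ hj.1).le, hper i ▸ hΘ hj.2⟩
    exact hΘ.injective ((coe_eq_coe_iff_of_mem_Ico (hmem_Ico hj) (hmem_Ico hj')).1 heq)
  have hn : (0 : ℤ) < #s := by exact_mod_cast card_pos.2 ⟨_, hmem 0⟩
  suffices ∀ i : ℤ, ∃ j : ℤ, (i < j ∧ j < i + #s) ∧
      tdX s ≤ min (Θ j - Θ i) (Θ (i + #s) - Θ j) ∧
      ∀ j', i < j' → j' < i + #s → j' ≠ j → min (Θ j' - Θ i) (Θ (i + #s) - Θ j') ≤ tbX s by
    choose f hf hfar hnear using this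
    exact ⟨f, fun i => (hf i).1, fun i => (hf i).2, hfar, hnear⟩
  intro i
  obtain ⟨⟨y, hy⟩, hfar, hnear⟩ := exists_partner_of_tbX_lt_tdX h ⟨_, hmem i⟩
  obtain ⟨j₀, rfl⟩ := hsurj y hy
  obtain ⟨m, ⟨hij, hji⟩, -⟩ := existsUnique_add_zsmul_mem_Ioc hn j₀ i
  have hj : (Θ (j₀ + m • #s) : AddCircle p) = Θ j₀ := by
    rw [smul_eq_mul, apply_add_mul_eq_add_zsmul hper, coe_add_zsmul_period]
  have hji : j₀ + m • #s < i + #s := by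
    refine hji.lt_of_ne fun heq => ?_
    have hyx : (⟨_, hy⟩ : s) = ⟨_, hmem i⟩ := by
      rw [Subtype.mk.injEq, ← hj, heq, hper, coe_add_period]
    rw [hyx, dist_self] at hfar
    linarith
  refine ⟨_, ⟨hij, hji⟩, ?_, fun j' hij' hj'i hne => ?_⟩
  · rw [← hdist hij.le hji.le, hj]
    exact hfar
  · rw [← hdist hij'.le hj'i.le]
    refine hnear ⟨_, hmem j'⟩ fun heq => hne (hcoe_inj ⟨hij', hj'i⟩ ⟨hij, hji⟩ ?_)
    rw [hj]
    exact congrArg Subtype.val heq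

theorem tdX_le_half_period {s : Finset (AddCircle p)} (hs : s.Nonempty) : tdX s ≤ p / 2 := by
  obtain ⟨x, hx⟩ := hs
  refine tdX_le_of_forall_dist_le ⟨x, hx⟩ fun y => ?_
  rw [Subtype.dist_eq, dist_eq_norm]
  simpa [abs_of_pos hp.out] using norm_le_half_period p hp.out.ne' (x := x - y)

theorem natCast_mul_le_mul_tbX {k : ℕ} (s : Finset (AddCircle p)) (hs : #s = 2 * k + 2)
    (h : tbX s < tdX s) : k * p ≤ (2 * k + 2) * tbX s := by
  have : Nontrivial s := Fintype.one_lt_card_iff_nontrivial.1 (by rw [Fintype.card_coe]; omega)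
  have hb : 0 ≤ tbX s := tbX_nonneg
  obtain ⟨Θ, hΘ, hper, hmem, hsurj⟩ := exists_strictMono_lift s (card_pos.1 (by omega))
  obtain ⟨f, hf⟩ := exists_isFarPartner hΘ hper hmem hsurj hb h
  have hstep (i : ℤ) : Θ (i + k) - Θ i ≤ tbX s := by
    rcases k.eq_zero_or_pos with rfl | hk
    · simpa using hb
    have := hf.two_mul_sub_eq hΘ hper h i
    rw [hs] at this
    push_cast at this
    exact hf.sub_le_of_lt_apply hΘ h (by omega) (by omega)
  have := natCast_mul_le_of_forall_sub_le hper hstep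
  rw [hs] at this
  push_cast at this
  exact this

end AddCircle

section PerturbedPolygon

variable {k : ℕ} {ε δ : ℝ}

noncomputable def polygonShift (k : ℕ) (ε δ : ℝ) (m : ℕ) : ℝ :=
  (if m % (k + 1) = 0 then 0 else ε) - (if m % 2 = 0 then 0 else δ)

noncomputable def perturbedPolygon (k : ℕ) (ε δ : ℝ) (m : ℕ) : AddCircle (2 * π) :=
  (m * (π / (k + 1)) + polygonShift k ε δ m : ℝ)

theorem abs_polygonShift_sub_le (hε : 0 ≤ ε) (hδ : 0 ≤ δ) (m m' : ℕ) :
    |polygonShift k ε δ m' - polygonShift k ε δ m| ≤ ε + δ := by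
  simp only [polygonShift, abs_le]
  constructor <;> split_ifs <;> linarith

theorem abs_polygonShift_sub_le_of_mod_two_eq (hε : 0 ≤ ε) {m m' : ℕ} (h : m % 2 = m' % 2) :
    |polygonShift k ε δ m' - polygonShift k ε δ m| ≤ ε := by
  simp only [polygonShift, h, abs_le]
  constructor <;> split_ifs <;> linarith

theorem abs_polygonShift_add_sub (hke : Even k) (hδ : 0 ≤ δ) (m : ℕ) :
    |polygonShift k ε δ (m + (k + 1)) - polygonShift k ε δ m| = δ := by
  obtain ⟨κ, rfl⟩ := hke
  simp only [polygonShift, Nat.add_mod_right]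
  rcases Nat.mod_two_eq_zero_or_one m with h | h
  · have h' : (m + (κ + κ + 1)) % 2 = 1 := by omega
    simp only [h, h', ↓reduceIte, one_ne_zero]
    split_ifs <;> simp [abs_of_nonneg hδ]
  · have h' : (m + (κ + κ + 1)) % 2 = 0 := by omega
    simp only [h, h', ↓reduceIte, one_ne_zero]
    split_ifs <;> simp [abs_of_nonneg hδ]

theorem dist_perturbedPolygon_add (hε : 0 ≤ ε) (hδ : 0 ≤ δ) (hεδ : ε + δ < π / (k + 1))
    {m D : ℕ} (hD : 0 < D) (hmD : m + D < 2 * k + 2) :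
    dist (perturbedPolygon k ε δ m) (perturbedPolygon k ε δ (m + D)) =
      min (D * (π / (k + 1)) + (polygonShift k ε δ (m + D) - polygonShift k ε δ m))
        (2 * π - (D * (π / (k + 1)) + (polygonShift k ε δ (m + D) - polygonShift k ε δ m))) := by
  have : Fact (0 < 2 * π) := ⟨two_pi_pos⟩
  have hβπ : (k + 1) * (π / (k + 1)) = π := by field_simp
  have hDk : (D : ℝ) + 1 ≤ 2 * k + 2 := by exact_mod_cast (show D + 1 ≤ 2 * k + 2 by omega)
  have hD₁ : (1 : ℝ) ≤ D := by exact_mod_cast hD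
  have hΔ := abs_le.1 (abs_polygonShift_sub_le (k := k) hε hδ m (m + D))
  rw [perturbedPolygon, perturbedPolygon, AddCircle.dist_coe_eq_min (by push_cast; nlinarith)
    (by push_cast; nlinarith)]
  push_cast
  ring_nf

theorem dist_perturbedPolygon_add_succ (hke : Even k) (hε : 0 ≤ ε) (hδ : 0 ≤ δ)
    (hεδ : ε + δ < π / (k + 1)) {m : ℕ} (hm : m ≤ k) :
    dist (perturbedPolygon k ε δ m) (perturbedPolygon k ε δ (m + (k + 1))) = π - δ := by
  have hβπ : (k + 1) * (π / (k + 1)) = π := by field_simp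
  rw [dist_perturbedPolygon_add hε hδ hεδ (by omega) (by omega)]
  push_cast
  rcases (abs_eq hδ).1 (abs_polygonShift_add_sub (ε := ε) hke hδ m) with h | h <;> rw [h]
  · rw [min_eq_right (by linarith)]; linarith
  · rw [min_eq_left (by linarith)]; linarith

theorem dist_perturbedPolygon_add_le (hke : Even k) (hε : 0 ≤ ε) (hδ : 0 ≤ δ)
    (hεδ : ε + δ < π / (k + 1)) {m D : ℕ} (hD : 0 < D) (hDk : D ≠ k + 1)
    (hmD : m + D < 2 * k + 2) :
    0 < dist (perturbedPolygon k ε δ m) (perturbedPolygon k ε δ (m + D)) ∧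
      dist (perturbedPolygon k ε δ m) (perturbedPolygon k ε δ (m + D)) ≤
        k * (π / (k + 1)) + ε := by
  have hβπ : (k + 1) * (π / (k + 1)) = π := by field_simp
  have hD₁ : (1 : ℝ) ≤ D := by exact_mod_cast hD
  have hΔ := abs_le.1 (abs_polygonShift_sub_le (k := k) hε hδ m (m + D))
  rw [dist_perturbedPolygon_add hε hδ hεδ hD hmD]
  refine ⟨lt_min (by nlinarith) ?_, ?_⟩
  · have : (D : ℝ) + 1 ≤ 2 * k + 2 := by exact_mod_cast (show D + 1 ≤ 2 * k + 2 by omega)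
    nlinarith
  -- an even index distance `k` or `k + 2` moves both ends by the same `δ`
  have hΔ_even (h : D % 2 = 0) := abs_le.1 (abs_polygonShift_sub_le_of_mod_two_eq (k := k)
    (δ := δ) hε (m := m) (m' := m + D) (by omega))
  obtain ⟨κ, rfl⟩ := hke
  rcases (show D + 1 ≤ κ + κ ∨ D = κ + κ ∨ D = κ + κ + 2 ∨ κ + κ + 3 ≤ D by omega)
    with h | rfl | rfl | h
  · have : (D : ℝ) + 1 ≤ ↑(κ + κ) := by exact_mod_cast h
    exact (min_le_left _ _).trans (by nlinarith)
  · exact (min_le_left _ _).trans (by linarith [hΔ_even (by omega)])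
  · push_cast at hβπ ⊢
    exact (min_le_right _ _).trans (by linarith [hΔ_even (by omega)])
  · have : (↑(κ + κ) : ℝ) + 3 ≤ D := by exact_mod_cast h
    exact (min_le_right _ _).trans (by nlinarith)

theorem dist_perturbedPolygon_of_ne (hke : Even k) (hε : 0 ≤ ε) (hδ : 0 ≤ δ)
    (hεδ : ε + δ < π / (k + 1)) {m m' : ℕ} (hmm' : m ≠ m') (hm : m < 2 * k + 2)
    (hm' : m' < 2 * k + 2) :
    ((m' = m + (k + 1) ∨ m = m' + (k + 1)) →
      dist (perturbedPolygon k ε δ m) (perturbedPolygon k ε δ m') = π - δ) ∧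
    (m' ≠ m + (k + 1) → m ≠ m' + (k + 1) →
      0 < dist (perturbedPolygon k ε δ m) (perturbedPolygon k ε δ m') ∧
      dist (perturbedPolygon k ε δ m) (perturbedPolygon k ε δ m') ≤ k * (π / (k + 1)) + ε) := by
  wlog hlt : m < m' generalizing m m'
  · rw [dist_comm]
    exact (this hmm'.symm hm' hm (by omega)).imp (fun h h' => h h'.symm) (fun h h₁ h₂ => h h₂ h₁)
  obtain ⟨D, hD, rfl⟩ : ∃ D, 0 < D ∧ m' = m + D := ⟨m' - m, by omega, by omega⟩
  refine ⟨fun h => ?_, fun h _ => dist_perturbedPolygon_add_le hke hε hδ hεδ hD (by omega) hm'⟩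
  obtain rfl : D = k + 1 := by omega
  exact dist_perturbedPolygon_add_succ hke hε hδ hεδ (by omega)

theorem dist_perturbedPolygon_zero (hk : k ≠ 0) (hke : Even k) (hε : 0 ≤ ε) (hδ : 0 ≤ δ)
    (hεδ : ε + δ < π / (k + 1)) :
    dist (perturbedPolygon k ε δ 0) (perturbedPolygon k ε δ k) = k * (π / (k + 1)) + ε := by
  have hβπ : (k + 1) * (π / (k + 1)) = π := by field_simp
  have h := dist_perturbedPolygon_add hε hδ hεδ (m := 0) (D := k) (by omega) (by omega)
  simp only [polygonShift, zero_add, Nat.zero_mod, Nat.mod_eq_of_lt (lt_add_one k), hk,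
    Nat.even_iff.1 hke, ↓reduceIte, sub_zero] at h
  rw [h, min_eq_left (by nlinarith)]

theorem injOn_perturbedPolygon (hke : Even k) (hε : 0 ≤ ε) (hδ : 0 ≤ δ)
    (hεδ : ε + δ < π / (k + 1)) : Set.InjOn (perturbedPolygon k ε δ) (range (2 * k + 2)) := by
  intro m hm m' hm' heq
  by_contra hne
  have h := dist_perturbedPolygon_of_ne hke hε hδ hεδ hne (mem_range.1 hm) (mem_range.1 hm')
  rw [heq, dist_self] at h
  by_cases hpair : m' = m + (k + 1) ∨ m = m' + (k + 1)
  · have : π / (k + 1) ≤ π := div_le_self pi_pos.le (by linarith [k.cast_nonneg (α := ℝ)])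
    linarith [h.1 hpair]
  · push Not at hpair
    exact (h.2 hpair.1 hpair.2).1.false

end PerturbedPolygon

theorem exists_finset_tbX_eq_tdX_eq {k : ℕ} (hk : 2 ≤ k) (hke : Even k) {b d : ℝ}
    (hb : k * π / (k + 1) ≤ b) (hbd : b < d) (hd : d ≤ π) :
    ∃ s : Finset (AddCircle (2 * π)), #s = 2 * k + 2 ∧ tbX s = b ∧ tdX s = d := by
  have hβπ : (k + 1) * (π / (k + 1)) = π := by field_simp
  have hkβ : k * (π / (k + 1)) ≤ b := by rwa [← mul_div_assoc]
  have hb₀ : 0 ≤ b := hkβ.trans' (by positivity)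
  have hε := sub_nonneg.2 hkβ
  have hδ := sub_nonneg.2 hd
  have hεδ : b - k * (π / (k + 1)) + (π - d) < π / (k + 1) := by linarith
  set P := perturbedPolygon k (b - k * (π / (k + 1))) (π - d)
  have hdist {m m' : ℕ} (hmm' : m ≠ m') (hm : m < 2 * k + 2) (hm' : m' < 2 * k + 2) :=
    dist_perturbedPolygon_of_ne hke hε hδ hεδ hmm' hm hm'
  simp only [sub_sub_cancel, add_sub_cancel] at hdist
  have hinj := injOn_perturbedPolygon hke hε hδ hεδ
  have hmem {m : ℕ} (hm : m < 2 * k + 2) : P m ∈ (range (2 * k + 2)).image P :=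
    mem_image_of_mem P (mem_range.2 hm)
  refine ⟨(range (2 * k + 2)).image P, by rw [card_image_of_injOn hinj, card_range],
    tbX_eq_and_tdX_eq_of_partner hbd (fun ⟨_, hx⟩ => ?_) ?_⟩
  · obtain ⟨m, hm, rfl⟩ := mem_image.1 hx
    rw [mem_range] at hm
    obtain ⟨m', hm', hpair⟩ : ∃ m' < 2 * k + 2, m' = m + (k + 1) ∨ m = m' + (k + 1) := by
      rcases le_or_gt m k with h | h
      exacts [⟨m + (k + 1), by omega, .inl rfl⟩, ⟨m - (k + 1), by omega, .inr (by omega)⟩]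
    refine ⟨⟨P m', hmem hm'⟩, (hdist (by omega) hm hm').1 hpair, fun ⟨_, hz⟩ hne => ?_⟩
    obtain ⟨m'', hm'', rfl⟩ := mem_image.1 hz
    rw [mem_range] at hm''
    have hm'm'' : m'' ≠ m' := fun h => hne (by simp [h])
    rw [Subtype.dist_eq]
    rcases eq_or_ne m m'' with rfl | hmm''
    · rwa [dist_self]
    · exact ((hdist hmm'' hm hm'').2 (by omega) (by omega)).2
  · refine ⟨⟨P 0, hmem (by omega)⟩, ⟨P (k + 1), hmem (by omega)⟩, ⟨P k, hmem (by omega)⟩,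
      fun h => ?_, ?_, ?_⟩
    · have := hinj (mem_range.2 (by omega)) (mem_range.2 (by omega)) (congrArg Subtype.val h)
      omega
    · exact ((hdist (by omega) (by omega) (by omega)).1 (.inl (zero_add _).symm)).ge.trans' hbd.le
    · rw [Subtype.dist_eq, dist_perturbedPolygon_zero (by omega) hke hε hδ hεδ, add_sub_cancel]

/-- Characterization of the principal persistence set of the circle for even `k`:
the pairs `(t_b(X), t_d(X))` realized by `(2k+2)`-point subsets `X ⊆ S¹` with
`t_b(X) < t_d(X)` are exactly the pairs with `kπ/(k+1) ≤ t_b < t_d ≤ π`. -/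
theorem circle_tb_td_characterization_even (k : ℕ) (hk : 2 ≤ k) (hke : Even k) :
    (∀ b d : ℝ, (k : ℝ) * Real.pi / (k + 1) ≤ b → b < d → d ≤ Real.pi →
      ∃ s : Finset (AddCircle (2 * Real.pi)),
        s.card = 2 * k + 2 ∧ tbX ↥s = b ∧ tdX ↥s = d) ∧
    (∀ s : Finset (AddCircle (2 * Real.pi)), s.card = 2 * k + 2 →
      tbX ↥s < tdX ↥s →
        (k : ℝ) * Real.pi / (k + 1) ≤ tbX ↥s ∧ tdX ↥s ≤ Real.pi) := by
  have : Fact (0 < 2 * π) := ⟨two_pi_pos⟩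
  refine ⟨fun b d hb hbd hd => exists_finset_tbX_eq_tdX_eq hk hke hb hbd hd,
    fun s hs h => ⟨?_, ?_⟩⟩
  · have := AddCircle.natCast_mul_le_mul_tbX s hs h
    rw [div_le_iff₀ (by positivity)]
    linarith
  · simpa using AddCircle.tdX_le_half_period (card_pos.1 (show 0 < #s by omega))
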